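/- arXiv:2509.25012 — 7 statements merged into one kernel-verified Lean document; each statement's English description precedes it below -/
import Mathlib

section
/- In an exact category (𝒜,ℰ), if i : X → Y and j : Y → Z are morphisms such that j ∘ i is an ℰ-admissible monomorphism (the obscure axiom), then i is an ℰ-admissible monomorphism. -/
open CategoryTheory Limits

universe v u

variable {C : Type u} [Category.{v} C] [Abelian C]

/-- `f` is an admissible monomorphism for the class `ses` of short exact sequences:
it fits as the mono of some kernel–cokernel pair in `ses`. -/
def IsAdmMono (ses : Set (ShortComplex C)) {X Y : C} (f : X ⟶ Y) : Prop :=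
  ∃ (Z : C) (g : Y ⟶ Z) (w : f ≫ g = 0), ShortComplex.mk f g w ∈ ses

/-- `g` is an admissible epimorphism for the class `ses` of short exact sequences. -/
def IsAdmEpi (ses : Set (ShortComplex C)) {Y Z : C} (g : Y ⟶ Z) : Prop :=
  ∃ (X : C) (f : X ⟶ Y) (w : f ≫ g = 0), ShortComplex.mk f g w ∈ ses

/-- A Quillen exact structure on the abelian category `C`: a class of short exact
sequences (kernel–cokernel pairs), closed under isomorphism, containing the split
short exact sequences, with admissible monomorphisms and epimorphisms closed under
composition, and stable under pushout along arbitrary morphisms (for admissible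
monos) and pullback along arbitrary morphisms (for admissible epis). -/
structure ExactStructure (C : Type u) [Category.{v} C] [Abelian C] where
  ses : Set (ShortComplex C)
  shortExact : ∀ S ∈ ses, S.ShortExact
  iso_mem : ∀ S T : ShortComplex C, (S ≅ T) → S ∈ ses → T ∈ ses
  split_mem : ∀ S : ShortComplex C, Nonempty S.Splitting → S ∈ ses
  admMono_comp : ∀ {X Y Z : C} {f : X ⟶ Y} {g : Y ⟶ Z},
    IsAdmMono ses f → IsAdmMono ses g → IsAdmMono ses (f ≫ g)
  admEpi_comp : ∀ {X Y Z : C} {f : X ⟶ Y} {g : Y ⟶ Z},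
    IsAdmEpi ses f → IsAdmEpi ses g → IsAdmEpi ses (f ≫ g)
  admMono_pushout : ∀ {X Y D : C} (f : X ⟶ Y) (h : X ⟶ D),
    IsAdmMono ses f → IsAdmMono ses (pushout.inr f h)
  admEpi_pullback : ∀ {Y Z W : C} (g : Y ⟶ Z) (h : W ⟶ Z),
    IsAdmEpi ses g → IsAdmEpi ses (pullback.snd g h)

/-- "obscure axiom": in an exact category `(𝒜, ℰ)`, if `i : X ⟶ Y` and
`j : Y ⟶ Z` are morphisms such that `j ∘ i` is an `ℰ`-admissible monomorphism, then
`i` is an `ℰ`-admissible monomorphism. -/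
theorem obscure_axiom (ℰ : ExactStructure C) {X Y Z : C} (i : X ⟶ Y) (j : Y ⟶ Z)
    (h : IsAdmMono ℰ.ses (i ≫ j)) : IsAdmMono ℰ.ses i := by
  obtain ⟨R, r, w0, hmem⟩ := h
  have hse : (ShortComplex.mk (i ≫ j) r w0).ShortExact := ℰ.shortExact _ hmem
  have hm0 : Mono (i ≫ j) := hse.mono_f
  have he0 : Epi r := hse.epi_g
  have hmi : Mono i := mono_of_mono i j
  set c : Y ⟶ cokernel i := cokernel.π i with hc
  have hijr : i ≫ j ≫ r = 0 := by rw [← Category.assoc]; exact w0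
  set h' : cokernel i ⟶ R := cokernel.desc i (j ≫ r) hijr with hh'
  have comm : j ≫ r = c ≫ h' := by rw [hc, hh', cokernel.π_desc]
  set e : Y ⟶ pullback r h' := pullback.lift j c comm with hedef
  have he1 : e ≫ pullback.fst r h' = j := pullback.lift_fst _ _ _
  have he2 : e ≫ pullback.snd r h' = c := pullback.lift_snd _ _ _
  -- `e` is a monomorphism
  have hmono : Mono e := by
    apply Preadditive.mono_of_cancel_zero
    intro T g hg
    have hgc : g ≫ c = 0 := by rw [← he2, ← Category.assoc, hg, zero_comp]
    have hgj : g ≫ j = 0 := by rw [← he1, ← Category.assoc, hg, zero_comp]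
    have htg : Abelian.monoLift i g hgc ≫ i = g := Abelian.monoLift_comp i g hgc
    have ht0 : Abelian.monoLift i g hgc = 0 := by
      apply zero_of_comp_mono (i ≫ j)
      rw [← Category.assoc, htg, hgj]
    rw [← htg, ht0, zero_comp]
  -- `e` is an epimorphism (a diagram chase, using refinements)
  have hepi : Epi e := by
    rw [epi_iff_surjective_up_to_refinements]
    intro T s
    obtain ⟨T₁, π₁, hπ₁, y₀, fac⟩ :=
      surjective_up_to_refinements_of_epi c (s ≫ pullback.snd r h')
    have hcond : pullback.fst r h' ≫ r = pullback.snd r h' ≫ h' := pullback.condition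
    have hd : (π₁ ≫ s ≫ pullback.fst r h' - y₀ ≫ j) ≫ r = 0 := by
      have h1 : y₀ ≫ j ≫ r = π₁ ≫ s ≫ pullback.snd r h' ≫ h' := by
        rw [comm, ← Category.assoc, ← fac]
        simp [Category.assoc]
      simp only [Preadditive.sub_comp, Category.assoc, hcond, h1, sub_self]
    obtain ⟨x, hx⟩ := hse.exact.lift'
      (π₁ ≫ s ≫ pullback.fst r h' - y₀ ≫ j) hd
    refine ⟨T₁, π₁, hπ₁, y₀ + x ≫ i, ?_⟩
    apply pullback.hom_ext
    · have hxij : x ≫ i ≫ j = π₁ ≫ s ≫ pullback.fst r h' - y₀ ≫ j := by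
        exact hx
      rw [Category.assoc, Category.assoc, he1, Preadditive.add_comp, Category.assoc, hxij]
      abel
    · rw [Category.assoc, Category.assoc, he2, Preadditive.add_comp, Category.assoc,
        hc, cokernel.condition, comp_zero, add_zero, ← hc, ← fac]
  have : IsIso e := isIso_of_mono_of_epi e
  -- the pullback axiom
  obtain ⟨K, f', w', hmem'⟩ := ℰ.admEpi_pullback r h' ⟨X, i ≫ j, w0, hmem⟩
  have hse' : (ShortComplex.mk f' (pullback.snd r h') w').ShortExact := ℰ.shortExact _ hmem'
  have hmf' : Mono f' := hse'.mono_f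
  have hinvc : inv e ≫ c = pullback.snd r h' := by
    rw [← he2, ← Category.assoc, IsIso.inv_hom_id, Category.id_comp]
  -- compare the two kernels
  have hfc : (f' ≫ inv e) ≫ c = 0 := by
    rw [Category.assoc, hinvc]; exact w'
  set τ : K ⟶ X := Abelian.monoLift i (f' ≫ inv e) hfc with hτ
  have hτi : τ ≫ i = f' ≫ inv e := Abelian.monoLift_comp _ _ _
  have hies : (i ≫ e) ≫ pullback.snd r h' = 0 := by
    rw [Category.assoc, he2, hc, cokernel.condition]
  obtain ⟨σ, hσ⟩ := hse'.exact.lift' (i ≫ e) hies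
  have hσ' : σ ≫ f' = i ≫ e := hσ
  have hτσ : τ ≫ σ = 𝟙 K := by
    rw [← cancel_mono f', Category.assoc, hσ', ← Category.assoc, hτi, Category.assoc,
      IsIso.inv_hom_id, Category.comp_id, Category.id_comp]
  have hστ : σ ≫ τ = 𝟙 X := by
    rw [← cancel_mono i, Category.assoc, hτi, ← Category.assoc, hσ', Category.assoc,
      IsIso.hom_inv_id, Category.comp_id, Category.id_comp]
  refine ⟨cokernel i, c, by rw [hc]; exact cokernel.condition i, ?_⟩
  refine ℰ.iso_mem (ShortComplex.mk f' (pullback.snd r h') w') _ ?_ hmem'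
  refine ShortComplex.isoMk ⟨τ, σ, hτσ, hστ⟩ (asIso e).symm (Iso.refl _) ?_ ?_
  · dsimp
    exact hτi
  · dsimp
    rw [Category.comp_id]
    exact hinvc
end

section
/- Let n ∈ ℕ* and B, E ⊆ {1,…,n} with (B, E[1]) a set partition of {1,…,n+1}. Then 𝒥(B,E) = {K interval : b(K) ∈ B, e(K) ∈ E} is a maximal adjacency-avoiding subset of the set of intervals of {1,…,n}: every interval not in 𝒥(B,E) is adjacent to some interval in 𝒥(B,E) or adding it creates an adjacent pair. -/
/-- An interval `⟦i,j⟧` of `{1,…,n}`, encoded by its endpoints `1 ≤ i ≤ j ≤ n`. -/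
def NInterval (n : ℕ) := {p : ℕ × ℕ // 1 ≤ p.1 ∧ p.1 ≤ p.2 ∧ p.2 ≤ n}

/-- Left endpoint `b(K)` of an interval. -/
def NInterval.b {n : ℕ} (K : NInterval n) : ℕ := K.1.1

/-- Right endpoint `e(K)` of an interval. -/
def NInterval.e {n : ℕ} (K : NInterval n) : ℕ := K.1.2

/-- Two intervals are adjacent if `b(K) = e(L)+1` or `b(L) = e(K)+1`. -/
def NInterval.Adjacent {n : ℕ} (K L : NInterval n) : Prop :=
  K.b = L.e + 1 ∨ L.b = K.e + 1

/-- A set of intervals is adjacency-avoiding if it contains no pair of adjacent intervals. -/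
def AdjAvoiding {n : ℕ} (𝒥 : Set (NInterval n)) : Prop :=
  ∀ K ∈ 𝒥, ∀ L ∈ 𝒥, ¬ K.Adjacent L

/-- The interval set `𝒥(B,E)`. -/
def JBE (n : ℕ) (B E : Finset ℕ) : Set (NInterval n) :=
  {K : NInterval n | K.b ∈ B ∧ K.e ∈ E}

/-- if `(B, E[1])` is a set partition of `{1,…,n+1}`, then `𝒥(B,E)` is a
maximal adjacency-avoiding subset of the intervals of `{1,…,n}`. -/
theorem JBE_maximal_adjacency_avoiding (n : ℕ) (hn : 1 ≤ n) (B E : Finset ℕ)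
    (hB : B ⊆ Finset.Icc 1 n) (hE : E ⊆ Finset.Icc 1 n)
    (hunion : B ∪ E.image (· + 1) = Finset.Icc 1 (n + 1))
    (hdisj : Disjoint B (E.image (· + 1))) :
    AdjAvoiding (JBE n B E) ∧
      ∀ 𝒥' : Set (NInterval n), AdjAvoiding 𝒥' → JBE n B E ⊆ 𝒥' → 𝒥' = JBE n B E := by
  have h1B : (1:ℕ) ∈ B := by
    have h : (1:ℕ) ∈ Finset.Icc 1 (n+1) := by simp
    rw [← hunion] at h
    rcases Finset.mem_union.1 h with h | h
    · exact h
    · exfalso; obtain ⟨e, he, heq⟩ := Finset.mem_image.1 h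
      have heq' : e + 1 = 1 := heq
      have h1e : 1 ≤ e := (Finset.mem_Icc.1 (hE he)).1
      omega
  have hnE : n ∈ E := by
    have h : n + 1 ∈ Finset.Icc 1 (n+1) := by simp
    rw [← hunion] at h
    rcases Finset.mem_union.1 h with h | h
    · exact absurd (Finset.mem_Icc.1 (hB h)).2 (by omega)
    · obtain ⟨e, he, heq⟩ := Finset.mem_image.1 h
      have heq' : e + 1 = n + 1 := heq
      have : e = n := by omega
      exact this ▸ he
  constructor
  · intro K hK L hL hadj
    rcases hadj with h | h
    · exact Finset.disjoint_left.1 hdisj hK.1 (Finset.mem_image.2 ⟨L.e, hL.2, h.symm⟩)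
    · exact Finset.disjoint_left.1 hdisj hL.1 (Finset.mem_image.2 ⟨K.e, hK.2, h.symm⟩)
  · intro 𝒥' havoid hsub
    apply Set.Subset.antisymm _ hsub
    intro K hK
    by_contra hKnot
    obtain ⟨hb1, hble, hen⟩ := K.2
    have hb1' : 1 ≤ K.b := hb1
    have hble' : K.b ≤ K.e := hble
    have hen' : K.e ≤ n := hen
    by_cases hbB : K.b ∈ B
    · have heE : K.e ∉ E := fun h => hKnot ⟨hbB, h⟩
      have heltn : K.e < n := lt_of_le_of_ne hen' (fun h => heE (by rw [h]; exact hnE))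
      have hmem : K.e + 1 ∈ Finset.Icc 1 (n+1) := Finset.mem_Icc.2 ⟨by omega, by omega⟩
      rw [← hunion] at hmem
      have hbB2 : K.e + 1 ∈ B := by
        rcases Finset.mem_union.1 hmem with h | h
        · exact h
        · exfalso; obtain ⟨e, he, heq⟩ := Finset.mem_image.1 h
          have heq' : e + 1 = K.e + 1 := heq
          have he' : e = K.e := by omega
          exact heE (he' ▸ he)
      have hLJ : (⟨(K.e+1, n), Nat.le_add_left 1 K.e, heltn, le_refl n⟩ : NInterval n) ∈ JBE n B E :=
        ⟨hbB2, hnE⟩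
      exact havoid K hK _ (hsub hLJ) (Or.inr rfl)
    · have hmem : K.b ∈ Finset.Icc 1 (n+1) := by
        have : K.b ≤ K.e := hble
        simp [Finset.mem_Icc, NInterval.b] at *; omega
      rw [← hunion] at hmem
      rcases Finset.mem_union.1 hmem with h | h
      · exact hbB h
      · obtain ⟨e', he', heq⟩ := Finset.mem_image.1 h
        have he'n : e' ≤ n := by have := hE he'; simp [Finset.mem_Icc] at this; omega
        have he'1 : 1 ≤ e' := by have := hE he'; simp [Finset.mem_Icc] at this; omega
        have hLJ : (⟨(1, e'), le_refl 1, he'1, he'n⟩ : NInterval n) ∈ JBE n B E :=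
          ⟨h1B, he'⟩
        exact havoid K hK _ (hsub hLJ) (Or.inl (by simpa [NInterval.b, NInterval.e] using heq.symm))
end

section
/- Let n ∈ ℕ*. Every maximal adjacency-avoiding subset of the intervals of {1,…,n} is of the form 𝒥(B,E) for some B, E ⊆ {1,…,n} such that (B, E[1]) is a set partition of {1,…,n+1}. -/
/-- every maximal adjacency-avoiding subset of the intervals of `{1,…,n}`
is of the form `𝒥(B,E)` for some `B, E ⊆ {1,…,n}` such that `(B, E[1])` is a set
partition of `{1,…,n+1}`. -/
theorem maximal_adjacency_avoiding_eq_JBE (n : ℕ) (hn : 1 ≤ n) (𝒥 : Set (NInterval n))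
    (havoid : AdjAvoiding 𝒥)
    (hmax : ∀ 𝒥' : Set (NInterval n), AdjAvoiding 𝒥' → 𝒥 ⊆ 𝒥' → 𝒥' = 𝒥) :
    ∃ B E : Finset ℕ, B ⊆ Finset.Icc 1 n ∧ E ⊆ Finset.Icc 1 n ∧
      B ∪ E.image (· + 1) = Finset.Icc 1 (n + 1) ∧
      Disjoint B (E.image (· + 1)) ∧ 𝒥 = JBE n B E := by
  classical
  -- any interval non-adjacent to all of 𝒥 must be in 𝒥
  have hadd : ∀ K : NInterval n, (∀ L ∈ 𝒥, ¬ K.Adjacent L) → K ∈ 𝒥 := by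
    intro K hK
    have hKK : ¬ K.Adjacent K := by
      have h2 := K.2.2.1
      rintro (h | h) <;> (unfold NInterval.b NInterval.e at h; omega)
    have havoid' : AdjAvoiding (insert K 𝒥) := by
      rintro L1 hL1 L2 hL2
      rcases hL1 with rfl | hL1
      · rcases hL2 with rfl | hL2
        · exact hKK
        · exact hK _ hL2
      · rcases hL2 with rfl | hL2
        · intro h; exact hK _ hL1 h.symm
        · exact havoid _ hL1 _ hL2
    have h := hmax _ havoid' (Set.subset_insert K 𝒥)
    rw [← h]; exact Set.mem_insert K 𝒥
  set B : Finset ℕ := (Finset.Icc 1 n).filter (fun b => ∃ K ∈ 𝒥, K.b = b) with hB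
  set E : Finset ℕ := (Finset.Icc 1 n).filter (fun e => ∃ K ∈ 𝒥, K.e = e) with hE
  have hBm : ∀ K ∈ 𝒥, K.b ∈ B := fun K hK =>
    Finset.mem_filter.2 ⟨Finset.mem_Icc.2 ⟨K.2.1, le_trans K.2.2.1 K.2.2.2⟩, K, hK, rfl⟩
  have hEm : ∀ K ∈ 𝒥, K.e ∈ E := fun K hK =>
    Finset.mem_filter.2 ⟨Finset.mem_Icc.2 ⟨le_trans K.2.1 K.2.2.1, K.2.2.2⟩, K, hK, rfl⟩
  have hdisj : Disjoint B (E.image (· + 1)) := by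
    rw [Finset.disjoint_left]
    intro x hxB hxE
    obtain ⟨-, K, hK, hKb⟩ := Finset.mem_filter.1 hxB
    obtain ⟨e, heE, he⟩ := Finset.mem_image.1 hxE
    obtain ⟨-, L, hL, hLe⟩ := Finset.mem_filter.1 heE
    exact havoid _ hK _ hL (Or.inl (by omega))
  -- n ∈ E always (the interval [1,n] is addable)
  have hnE : n ∈ E := by
    have h1n : (⟨(1, n), le_refl 1, hn, le_refl n⟩ : NInterval n) ∈ 𝒥 := by
      apply hadd
      rintro L hL (h | h)
      · have := L.2.1; have := le_trans L.2.1 L.2.2.1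
        unfold NInterval.b NInterval.e at h; simp at h; omega
      · have := le_trans L.2.2.1 L.2.2.2
        unfold NInterval.b NInterval.e at h; simp at h; omega
    exact hEm _ h1n
  -- for i ∈ [1,n] not in E[1], the interval [i,n] is addable, so i ∈ B
  have hIcc : ∀ i, 1 ≤ i → i ≤ n → i ∉ E.image (· + 1) → i ∈ B := by
    intro i hi1 hin hiE
    set K : NInterval n := ⟨(i, n), hi1, hin, le_refl n⟩ with hKdef
    have hK : K ∈ 𝒥 := by
      apply hadd
      rintro L hL (h | h)
      · apply hiE
        refine Finset.mem_image.2 ⟨L.e, hEm _ hL, ?_⟩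
        unfold NInterval.b at h; simp [hKdef] at h; omega
      · have := le_trans L.2.2.1 L.2.2.2
        unfold NInterval.b NInterval.e at h; simp [hKdef] at h; omega
    have := hBm _ hK
    simpa [NInterval.b, hKdef] using this
  refine ⟨B, E, Finset.filter_subset _ _, Finset.filter_subset _ _, ?_, hdisj, ?_⟩
  · ext i
    simp only [Finset.mem_union, Finset.mem_Icc]
    constructor
    · rintro (h | h)
      · have := Finset.mem_Icc.1 (Finset.filter_subset _ _ h); omega
      · obtain ⟨e, heE, he⟩ := Finset.mem_image.1 h
        have := Finset.mem_Icc.1 (Finset.filter_subset _ _ heE); omega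
    · rintro ⟨h1, h2⟩
      by_cases hi : i ∈ E.image (· + 1)
      · exact Or.inr hi
      · rcases Nat.lt_or_ge i (n + 1) with hlt | hge
        · exact Or.inl (hIcc i h1 (by omega) hi)
        · have hieq : i = n + 1 := by omega
          subst hieq
          exact absurd (Finset.mem_image.2 ⟨n, hnE, rfl⟩) hi
  · ext K
    simp only [JBE, Set.mem_setOf_eq]
    constructor
    · intro hK; exact ⟨hBm _ hK, hEm _ hK⟩
    · rintro ⟨hKb, hKe⟩
      apply hadd
      rintro L hL (h | h)
      · exact Finset.disjoint_left.1 hdisj hKb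
          (Finset.mem_image.2 ⟨L.e, hEm _ hL, by omega⟩)
      · exact Finset.disjoint_left.1 hdisj (hBm _ hL)
          (Finset.mem_image.2 ⟨K.e, hKe, by omega⟩)
end

section
/- Let n ∈ ℕ*. The number of maximal adjacency-avoiding subsets of the set of intervals of {1,…,n} equals 2^{n-1}. -/
/-- Bounds of an interval, stated via `b` and `e`. -/
lemma NInterval.bounds {n : ℕ} (K : NInterval n) : 1 ≤ K.b ∧ K.b ≤ K.e ∧ K.e ≤ n := K.2

/-- The candidate maximal set attached to a set `S` of begins. -/
def JS (n : ℕ) (S : Set ℕ) : Set (NInterval n) := {K | K.b ∈ S ∧ K.e + 1 ∉ S}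

lemma JS_avoiding (n : ℕ) (S : Set ℕ) : AdjAvoiding (JS n S) := by
  rintro K ⟨hKb, hKe⟩ L ⟨hLb, hLe⟩ (h | h)
  · exact hLe (h ▸ hKb)
  · exact hKe (h ▸ hLb)

lemma JS_maximal (n : ℕ) (hn : 1 ≤ n) (S : Set ℕ) (h1 : 1 ∈ S) (hSn : ∀ i ∈ S, i ≤ n)
    (𝒥' : Set (NInterval n)) (hA : AdjAvoiding 𝒥') (hsub : JS n S ⊆ 𝒥') : 𝒥' = JS n S := by
  apply Set.Subset.antisymm _ hsub
  intro K hK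
  obtain ⟨hK1, hK2, hK3⟩ := K.bounds
  by_contra hKnot
  rcases Classical.em (K.b ∈ S) with hb | hb
  · -- then K.e + 1 ∈ S
    have he : K.e + 1 ∈ S := by
      by_contra he; exact hKnot ⟨hb, he⟩
    have hle : K.e + 1 ≤ n := hSn _ he
    set L : NInterval n := ⟨(K.e + 1, n), ⟨by omega, hle, le_refl n⟩⟩ with hL
    have hLb : L.b = K.e + 1 := rfl
    have hLe : L.e = n := rfl
    have hLmem : L ∈ JS n S := by
      refine ⟨by rw [hLb]; exact he, ?_⟩
      rw [hLe]
      intro hcon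
      have := hSn _ hcon
      omega
    exact hA K hK L (hsub hLmem) (Or.inr hLb)
  · -- K.b ∉ S, so K.b ≥ 2 and (1, K.b - 1) is in JS
    have hKb1 : K.b ≠ 1 := fun h => hb (h ▸ h1)
    have hKb2 : 2 ≤ K.b := by omega
    set L : NInterval n := ⟨(1, K.b - 1), ⟨le_refl 1, by omega, by omega⟩⟩ with hL
    have hLb : L.b = 1 := rfl
    have hLe : L.e = K.b - 1 := rfl
    have hLmem : L ∈ JS n S := by
      refine ⟨by rw [hLb]; exact h1, ?_⟩
      rw [hLe]
      have : K.b - 1 + 1 = K.b := by omega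
      rw [this]; exact hb
    have hadj : K.Adjacent L := Or.inl (by rw [hLe]; omega)
    exact hA K hK L (hsub hLmem) hadj

/-- for `n ≥ 1`, the number of maximal adjacency-avoiding subsets of the
set of intervals of `{1,…,n}` equals `2^(n-1)`. -/
theorem card_maximal_adjacency_avoiding (n : ℕ) (hn : 1 ≤ n) :
    Set.ncard {𝒥 : Set (NInterval n) | AdjAvoiding 𝒥 ∧
      ∀ 𝒥' : Set (NInterval n), AdjAvoiding 𝒥' → 𝒥 ⊆ 𝒥' → 𝒥' = 𝒥} = 2 ^ (n - 1) := by
  classical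
  set g : Finset ℕ → Set (NInterval n) := fun A => JS n (↑(insert 1 A) : Set ℕ) with hg
  have h1mem : ∀ A : Finset ℕ, (1 : ℕ) ∈ (↑(insert 1 A) : Set ℕ) := by
    intro A; simp
  have hbound : ∀ A : Finset ℕ, A ⊆ Finset.Icc 2 n →
      ∀ i ∈ (↑(insert 1 A) : Set ℕ), i ≤ n := by
    intro A hA i hi
    simp only [Finset.coe_insert, Set.mem_insert_iff, Finset.mem_coe] at hi
    rcases hi with rfl | hi
    · exact hn
    · have := hA hi
      simp only [Finset.mem_Icc] at this
      exact this.2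
  have hset : {𝒥 : Set (NInterval n) | AdjAvoiding 𝒥 ∧
      ∀ 𝒥' : Set (NInterval n), AdjAvoiding 𝒥' → 𝒥 ⊆ 𝒥' → 𝒥' = 𝒥}
      = ↑((Finset.Icc 2 n).powerset.image g) := by
    ext 𝒥
    simp only [Set.mem_setOf_eq, Finset.coe_image, Set.mem_image, Finset.mem_coe,
      Finset.mem_powerset]
    constructor
    · rintro ⟨havoid, hmax⟩
      set A : Finset ℕ := (Finset.Icc 2 n).filter (fun i => ∃ K ∈ 𝒥, K.b = i) with hAdef
      refine ⟨A, Finset.filter_subset _ _, ?_⟩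
      have hsub : 𝒥 ⊆ g A := by
        intro K hK
        obtain ⟨hK1, hK2, hK3⟩ := K.bounds
        constructor
        · simp only [Finset.coe_insert, Set.mem_insert_iff, Finset.mem_coe, hAdef,
            Finset.mem_filter, Finset.mem_Icc]
          rcases Classical.em (K.b = 1) with h | h
          · exact Or.inl h
          · exact Or.inr ⟨⟨by omega, by omega⟩, K, hK, rfl⟩
        · simp only [Finset.coe_insert, Set.mem_insert_iff, Finset.mem_coe, hAdef,
            Finset.mem_filter, Finset.mem_Icc]
          rintro (h | ⟨-, L, hL, hLb⟩)
          · omega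
          · exact havoid K hK L hL (Or.inr hLb)
      exact hmax (g A) (JS_avoiding n _) hsub
    · rintro ⟨A, hA, rfl⟩
      exact ⟨JS_avoiding n _,
        fun 𝒥' h𝒥' hsub => JS_maximal n hn _ (h1mem A) (hbound A hA) 𝒥' h𝒥' hsub⟩
  rw [hset, Set.ncard_coe_finset]
  have hinj : Set.InjOn g ((Finset.Icc 2 n).powerset : Finset (Finset ℕ)) := by
    intro A hA A' hA' hEq
    rw [Finset.mem_coe, Finset.mem_powerset] at hA hA'
    have key : ∀ B B' : Finset ℕ, B ⊆ Finset.Icc 2 n → B' ⊆ Finset.Icc 2 n →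
        g B = g B' → B ⊆ B' := by
      intro B B' hB hB' hBB i hi
      have hi2 : 2 ≤ i ∧ i ≤ n := by
        have := hB hi; simpa [Finset.mem_Icc] using this
      set K : NInterval n := ⟨(i, n), ⟨by omega, hi2.2, le_refl n⟩⟩ with hK
      have hKb : K.b = i := rfl
      have hKe : K.e = n := rfl
      have hKmem : K ∈ g B := by
        constructor
        · simp only [Finset.coe_insert, Set.mem_insert_iff, Finset.mem_coe]
          exact Or.inr (hKb ▸ hi)
        · rw [hKe]
          simp only [Finset.coe_insert, Set.mem_insert_iff, Finset.mem_coe]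
          rintro (h | h)
          · omega
          · have := hB h
            simp only [Finset.mem_Icc] at this; omega
      rw [hBB] at hKmem
      have hm : K.b ∈ (↑(insert 1 B') : Set ℕ) := hKmem.1
      rw [hKb] at hm
      simp only [Finset.coe_insert, Set.mem_insert_iff, Finset.mem_coe] at hm
      rcases hm with h | h
      · omega
      · exact h
    exact Finset.Subset.antisymm (key A A' hA hA' hEq) (key A' A hA' hA hEq.symm)
  rw [Finset.card_image_of_injOn hinj, Finset.card_powerset, Nat.card_Icc,
    show n + 1 - 2 = n - 1 from by omega]
end

section
/- Let 𝒜 be an abelian category, M ∈ 𝒜, and g : E_M → X a right minimal add(M)-approximation of X which is an epimorphism with kernel inclusion f : K_M → E_M. Then f belongs to the Jacobson radical Rad(K_M, E_M). -/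
open CategoryTheory Limits

universe v u

variable {C : Type u} [Category.{v} C] [Abelian C] [HasFiniteBiproducts C]

/-- The Jacobson radical of an additive category:
`Rad(X,Y) = {h : X ⟶ Y | for all g : Y ⟶ X, id_Y − h∘g is invertible}`. -/
def catRad (X Y : C) : Set (X ⟶ Y) :=
  {h | ∀ g : Y ⟶ X, IsIso (𝟙 Y - g ≫ h)}

/-- `X` belongs to `add(M)`: it is a direct summand of a finite direct sum of copies
of `M`. -/
def InAdd (M X : C) : Prop :=
  ∃ (m : ℕ) (s : X ⟶ ⨁ (fun _ : Fin m => M)) (r : (⨁ (fun _ : Fin m => M)) ⟶ X),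
    s ≫ r = 𝟙 X

/-- `g : C' ⟶ X` is a right `add(M)`-approximation: `C' ∈ add(M)` and every morphism
from an object of `add(M)` to `X` factors through `g`. -/
def IsRightAddApprox (M : C) {C' X : C} (g : C' ⟶ X) : Prop :=
  InAdd M C' ∧ ∀ (D : C), InAdd M D → ∀ φ : D ⟶ X, ∃ ψ : D ⟶ C', ψ ≫ g = φ

/-- A morphism `g : C' ⟶ X` is right minimal if every `β : C' ⟶ C'` with `β ≫ g = g`
is an isomorphism. -/
def IsRightMinimal {C' X : C} (g : C' ⟶ X) : Prop :=
  ∀ β : C' ⟶ C', β ≫ g = g → IsIso β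

/-- if `g : E_M → X` is a right minimal `add(M)`-approximation of `X`
which is an epimorphism, then the kernel inclusion `f : K_M → E_M` lies in the
Jacobson radical `Rad(K_M, E_M)`. -/
theorem kernel_of_minimal_approx_mem_rad (M X E_M : C) (g : E_M ⟶ X) [Epi g]
    (happrox : IsRightAddApprox M g) (hmin : IsRightMinimal g) :
    kernel.ι g ∈ catRad (kernel g) E_M := by
  intro u
  exact hmin _ (by simp [Preadditive.sub_comp, Category.assoc, kernel.condition])
end

section
/- Let 𝒜 be a hereditary abelian category with exact structure ℰ and let 𝒞 ⊆ 𝒜 be a full additive subcategory that is ℰ-adapted, i.e., Ext¹(X,Y) ⊆ ℰ for all X,Y ∈ 𝒞. Then for any D, E ∈ 𝒞 and any ℰ-quotient X of E (i.e., X appears in an ℰ-exact sequence 0 → K → E → X → 0), every extension in Ext¹(D,X) lies in ℰ. -/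
open CategoryTheory Limits

universe v u

variable {C : Type u} [Category.{v} C] [Abelian C]

/-- Auxiliary lemma: if there is a morphism of short exact sequences
`(p, t, e)` (with `e` an isomorphism) from a sequence `S` belonging to an exact
structure `ℰ` to a short exact sequence `V`, then `V` belongs to `ℰ` as well.
Indeed, the left-hand square of such a ladder is a pushout square, so that `V.f`
is obtained as the pushout of the admissible monomorphism `S.f` along `p`. -/
lemma mem_of_ladder (ℰ : ExactStructure C) {S V : ShortComplex C}
    (hS : S.ShortExact) (hV : V.ShortExact) (hmem : S ∈ ℰ.ses)
    (p : S.X₁ ⟶ V.X₁) (t : S.X₂ ⟶ V.X₂) (e : S.X₃ ≅ V.X₃)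
    (hsq : S.f ≫ t = p ≫ V.f)
    (htv : t ≫ V.g = S.g ≫ e.hom) : V ∈ ℰ.ses := by
  haveI := hS.mono_f
  haveI := hS.epi_g
  haveI := hV.mono_f
  haveI := hV.epi_g
  -- the middle short complex witnessing that the left square is a pushout
  have hzmid : biprod.lift S.f (-p) ≫ biprod.desc t V.f = 0 := by
    simp [biprod.lift_desc, hsq]
  have hex_mid : (ShortComplex.mk (biprod.lift S.f (-p)) (biprod.desc t V.f) hzmid).Exact := by
    rw [ShortComplex.exact_iff_exact_up_to_refinements]
    intro A₀ z hz
    have hz' : (z ≫ biprod.fst) ≫ t + (z ≫ biprod.snd) ≫ V.f = 0 :=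
      calc (z ≫ biprod.fst) ≫ t + (z ≫ biprod.snd) ≫ V.f
          = z ≫ (biprod.fst ≫ t) + z ≫ (biprod.snd ≫ V.f) := by
            rw [Category.assoc, Category.assoc]
        _ = z ≫ (biprod.fst ≫ t + biprod.snd ≫ V.f) := (Preadditive.comp_add _ _ _ _ _ _).symm
        _ = z ≫ biprod.desc t V.f := by rw [← biprod.desc_eq]
        _ = 0 := hz
    have hyt : (z ≫ biprod.fst) ≫ t = -((z ≫ biprod.snd) ≫ V.f) :=
      eq_neg_of_add_eq_zero_left hz'
    have hy : (z ≫ biprod.fst) ≫ S.g = 0 := by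
      have h1 : ((z ≫ biprod.fst) ≫ S.g) ≫ e.hom = 0 ≫ e.hom := by
        rw [Category.assoc, ← htv, ← Category.assoc, hyt]
        simp
      exact (cancel_mono e.hom).1 h1
    obtain ⟨A₁, π, hπ, eE, hE1⟩ := hS.exact.exact_up_to_refinements _ hy
    have h3 : eE ≫ (p ≫ V.f) = π ≫ ((z ≫ biprod.fst) ≫ t) :=
      calc eE ≫ (p ≫ V.f) = eE ≫ (S.f ≫ t) := by rw [hsq]
        _ = (eE ≫ S.f) ≫ t := (Category.assoc _ _ _).symm
        _ = (π ≫ (z ≫ biprod.fst)) ≫ t := by rw [hE1]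
        _ = π ≫ ((z ≫ biprod.fst) ≫ t) := Category.assoc _ _ _
    have h2 : (π ≫ (z ≫ biprod.snd) + eE ≫ p) ≫ V.f = 0 := by
      have e1 : (π ≫ (z ≫ biprod.snd) + eE ≫ p) ≫ V.f =
          π ≫ ((z ≫ biprod.snd) ≫ V.f) + π ≫ ((z ≫ biprod.fst) ≫ t) := by
        rw [Preadditive.add_comp]
        congr 1
        · rw [Category.assoc]
        · rw [Category.assoc]; exact h3
      rw [e1, hyt, Preadditive.comp_neg]
      simp
    have hx : π ≫ (z ≫ biprod.snd) = -(eE ≫ p) :=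
      eq_neg_of_add_eq_zero_left ((cancel_mono V.f).1 (by rw [h2, zero_comp]))
    refine ⟨A₁, π, hπ, eE, ?_⟩
    apply biprod.hom_ext
    · simpa using hE1
    · simpa [Preadditive.comp_neg] using hx
  have hepi_mid : Epi (ShortComplex.mk (biprod.lift S.f (-p)) (biprod.desc t V.f) hzmid).g := by
    rw [epi_iff_surjective_up_to_refinements]
    intro A₀ wmap
    obtain ⟨A₁, π₁, hπ₁, y, hy₁⟩ :=
      surjective_up_to_refinements_of_epi S.g (wmap ≫ V.g ≫ e.inv)
    have h3 : (π₁ ≫ wmap - y ≫ t) ≫ V.g = 0 := by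
      have e2 : (y ≫ t) ≫ V.g = π₁ ≫ wmap ≫ V.g :=
        calc (y ≫ t) ≫ V.g = y ≫ (t ≫ V.g) := Category.assoc _ _ _
          _ = y ≫ (S.g ≫ e.hom) := by rw [htv]
          _ = (y ≫ S.g) ≫ e.hom := (Category.assoc _ _ _).symm
          _ = (π₁ ≫ (wmap ≫ V.g ≫ e.inv)) ≫ e.hom := by rw [hy₁]
          _ = π₁ ≫ wmap ≫ V.g := by simp
      rw [Preadditive.sub_comp, e2]
      simp
    obtain ⟨A₂, π₂, hπ₂, xX, hxX⟩ := hV.exact.exact_up_to_refinements _ h3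
    refine ⟨A₂, π₂ ≫ π₁, epi_comp _ _, biprod.lift (π₂ ≫ y) xX, ?_⟩
    have h4 : xX ≫ V.f = π₂ ≫ (π₁ ≫ wmap) - π₂ ≫ (y ≫ t) := by
      rw [← Preadditive.comp_sub, ← hxX]
    show (π₂ ≫ π₁) ≫ wmap = biprod.lift (π₂ ≫ y) xX ≫ biprod.desc t V.f
    rw [biprod.lift_desc, h4]
    simp
  -- the left square is a pushout square
  haveI := hepi_mid
  have hcoker : IsColimit (CokernelCofork.ofπ
      (ShortComplex.mk (biprod.lift S.f (-p)) (biprod.desc t V.f) hzmid).g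
      (ShortComplex.mk (biprod.lift S.f (-p)) (biprod.desc t V.f) hzmid).zero) :=
    hex_mid.gIsCokernel
  have sq : CommSq S.f p t V.f := ⟨hsq⟩
  have hpo : IsColimit (PushoutCocone.mk t V.f sq.w) :=
    sq.isColimitEquivIsColimitCokernelCofork.symm (by exact hcoker)
  let χ : pushout S.f p ≅ V.X₂ :=
    IsColimit.coconePointUniqueUpToIso (pushoutIsPushout S.f p) hpo
  have hinr : pushout.inr S.f p ≫ χ.hom = V.f := by
    have h := IsColimit.comp_coconePointUniqueUpToIso_hom
      (pushoutIsPushout S.f p) hpo WalkingSpan.right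
    simp at h
    exact h
  -- `S.f` is an admissible mono, hence so is its pushout `pushout.inr S.f p`
  have hadm : IsAdmMono ℰ.ses S.f := ⟨S.X₃, S.g, S.zero, hmem⟩
  obtain ⟨Z, q, wq, hqmem⟩ := ℰ.admMono_pushout S.f p hadm
  have huχ : V.f ≫ χ.inv = pushout.inr S.f p := by
    rw [← hinr, Category.assoc, χ.hom_inv_id, Category.comp_id]
  have wq' : V.f ≫ (χ.inv ≫ q) = 0 := by
    rw [← Category.assoc, huχ, wq]
  have hmem' : ShortComplex.mk V.f (χ.inv ≫ q) wq' ∈ ℰ.ses := by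
    refine ℰ.iso_mem (ShortComplex.mk (pushout.inr S.f p) q wq) _
      (ShortComplex.isoMk (Iso.refl _) χ (Iso.refl _) ?_ ?_) hqmem
    · simpa using hinr.symm
    · simp
  have hSE' := ℰ.shortExact _ hmem'
  haveI := hSE'.epi_g
  let θ : Z ⟶ V.X₃ := hSE'.exact.desc V.g V.zero
  have hθ : (χ.inv ≫ q) ≫ θ = V.g := hSE'.exact.g_desc V.g V.zero
  let θ' : V.X₃ ⟶ Z := hV.exact.desc (χ.inv ≫ q) wq'
  have hθ' : V.g ≫ θ' = χ.inv ≫ q := hV.exact.g_desc _ wq'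
  have hepiq : Epi ((ShortComplex.mk V.f (χ.inv ≫ q) wq').g) := hSE'.epi_g
  have hθθ' : θ ≫ θ' = 𝟙 Z := by
    have : (χ.inv ≫ q) ≫ θ ≫ θ' = (χ.inv ≫ q) ≫ 𝟙 Z := by
      rw [← Category.assoc, hθ, hθ', Category.comp_id]
    exact (cancel_epi (ShortComplex.mk V.f (χ.inv ≫ q) wq').g).1 this
  have hθ'θ : θ' ≫ θ = 𝟙 V.X₃ := by
    have : V.g ≫ θ' ≫ θ = V.g ≫ 𝟙 V.X₃ := by
      rw [← Category.assoc, hθ', hθ, Category.comp_id]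
    exact (cancel_epi V.g).1 this
  refine ℰ.iso_mem (ShortComplex.mk V.f (χ.inv ≫ q) wq') _
    (ShortComplex.isoMk (Iso.refl _) (Iso.refl _)
      (⟨θ, θ', hθθ', hθ'θ⟩ : Z ≅ V.X₃) ?_ ?_) hmem'
  · simp
  · simpa using hθ.symm

universe w

open Abelian in
/-- let `𝒜` be a hereditary abelian category with exact structure `ℰ`
and `𝒞 ⊆ 𝒜` an `ℰ`-adapted subcategory (every extension between objects of `𝒞`
belongs to `ℰ`).  Then for any `D, E ∈ 𝒞` and any `ℰ`-quotient `X` of `E` (the third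
term of an `ℰ`-exact sequence with middle term `E`), every extension of `D` by `X`
lies in `ℰ`. -/
theorem ext_of_quotient_mem_of_adapted [HasExt.{w} C] (ℰ : ExactStructure C)
    (hereditary : ∀ X Y : C, Subsingleton (Ext.{w} X Y 2))
    (𝒞 : Set C)
    (hadapted : ∀ S : ShortComplex C, S.ShortExact → S.X₃ ∈ 𝒞 → S.X₁ ∈ 𝒞 → S ∈ ℰ.ses)
    (T : ShortComplex C) (hT : T ∈ ℰ.ses) (hE : T.X₂ ∈ 𝒞)
    {D W : C} (hD : D ∈ 𝒞) (u : T.X₃ ⟶ W) (v : W ⟶ D) (w : u ≫ v = 0)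
    (hse : (ShortComplex.mk u v w).ShortExact) :
    ShortComplex.mk u v w ∈ ℰ.ses := by
  have hT' : T.ShortExact := ℰ.shortExact T hT
  -- Step 1: lift the extension class along `Ext¹(D, E) → Ext¹(D, X)`, using
  -- the long exact sequence and the vanishing of `Ext²(D, K)` (hereditarity).
  obtain ⟨x₂, hx₂⟩ := Ext.covariant_sequence_exact₃ _ hT' hse.extClass
    (show 1 + 1 = 2 by norm_num) (@Subsingleton.elim _ (hereditary _ _) _ 0)
  -- Step 2: realize everything in the derived category.
  letI := HasDerivedCategory.standard C
  let e : DerivedCategory.singleFunctor C 0 ≅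
      CochainComplex.singleFunctor C 0 ⋙ DerivedCategory.Q :=
    (SingleFunctors.evaluation _ _ 0).mapIso (DerivedCategory.singleFunctorsPostcompQIso C)
  let η : DerivedCategory.singleFunctor C 0 ⋙ DerivedCategory.homologyFunctor C 0 ≅ 𝟭 C :=
    Functor.isoWhiskerRight e (DerivedCategory.homologyFunctor C 0) ≪≫ Functor.associator _ _ _ ≪≫
      Functor.isoWhiskerLeft (CochainComplex.singleFunctor C 0)
        (DerivedCategory.homologyFunctorFactors C 0) ≪≫
      HomologicalComplex.homologyFunctorSingleIso C (ComplexShape.up ℤ) 0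
  have hzero : ∀ (A : C) (n : ℤ), n ≠ 0 → IsZero ((DerivedCategory.homologyFunctor C n).obj
      ((DerivedCategory.singleFunctor C 0).obj A)) := by
    intro A n hn
    refine IsZero.of_iso ?_ ((DerivedCategory.homologyFunctor C n).mapIso (e.app A) ≪≫
      (DerivedCategory.homologyFunctorFactors C n).app _)
    exact HomologicalComplex.isZero_single_obj_homology _ 0 A n hn
  -- the distinguished triangle attached to the lifted class `x₂`
  obtain ⟨M, fM, gM, hTr⟩ := Pretriangulated.distinguished_cocone_triangle₂
    (x₂.hom : _ ⟶ ((DerivedCategory.singleFunctor C 0).obj T.X₂)⟦(1 : ℤ)⟧)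
  -- a morphism of triangles towards the triangle of the short exact sequence `(u, v)`
  have hcommδ : (Pretriangulated.Triangle.mk fM gM x₂.hom).mor₃ ≫
      ((DerivedCategory.singleFunctor C 0).map T.g)⟦(1 : ℤ)⟧' =
      𝟙 _ ≫ hse.singleTriangle.mor₃ := by
    rw [Category.id_comp]
    have h1 := Ext.hom_comp_singleFunctor_map_shift (C := C) x₂ T.g
    rw [hx₂, hse.extClass_hom] at h1
    exact h1
  obtain ⟨bmap, hb₁, hb₂⟩ := Pretriangulated.complete_distinguished_triangle_morphism₂
    (Pretriangulated.Triangle.mk fM gM x₂.hom) hse.singleTriangle hTr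
    hse.singleTriangle_distinguished ((DerivedCategory.singleFunctor C 0).map T.g) (𝟙 _) hcommδ
  change M ⟶ (DerivedCategory.singleFunctor C 0).obj W at bmap
  have hb₁' : fM ≫ bmap = (DerivedCategory.singleFunctor C 0).map (T.g ≫ u) := by
    rw [Functor.map_comp]; exact hb₁
  have hb₂' : bmap ≫ (DerivedCategory.singleFunctor C 0).map v = gM := by
    have h2 : gM ≫ 𝟙 ((DerivedCategory.singleFunctor C 0).obj
        ((ShortComplex.mk u v w).X₃)) = bmap ≫ hse.singleTriangle.mor₂ := hb₂
    rw [Category.comp_id] at h2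
    exact h2.symm
  -- Step 3: take homology to get a short exact sequence `E ↪ Y ↠ D` in `C`
  have hmono : Mono ((DerivedCategory.homologyFunctor C 0).map fM) :=
    (DerivedCategory.HomologySequence.mono_homologyMap_mor₁_iff _ hTr (-1) 0
      (by norm_num)).2 ((hzero _ (-1) (by norm_num)).eq_of_src _ _)
  have hepi : Epi ((DerivedCategory.homologyFunctor C 0).map gM) :=
    (DerivedCategory.HomologySequence.epi_homologyMap_mor₂_iff _ hTr 0 1 rfl).2
      ((hzero _ 1 one_ne_zero).eq_of_tgt _ _)
  have hfg : fM ≫ gM = 0 := Pretriangulated.comp_distTriang_mor_zero₁₂ _ hTr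
  have hzS0 : (DerivedCategory.homologyFunctor C 0).map fM ≫
      (DerivedCategory.homologyFunctor C 0).map gM = 0 := by
    rw [← Functor.map_comp, hfg, Functor.map_zero]
  have hexact0 : (ShortComplex.mk ((DerivedCategory.homologyFunctor C 0).map fM)
      ((DerivedCategory.homologyFunctor C 0).map gM) hzS0).Exact :=
    DerivedCategory.HomologySequence.exact₂ _ hTr 0
  have hS0 : (ShortComplex.mk ((DerivedCategory.homologyFunctor C 0).map fM)
      ((DerivedCategory.homologyFunctor C 0).map gM) hzS0).ShortExact :=
    ShortComplex.ShortExact.mk' hexact0 hmono hepi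
  -- transport the ends of this sequence to `E` and `D`
  have hzS : (η.inv.app T.X₂ ≫ (DerivedCategory.homologyFunctor C 0).map fM) ≫
      ((DerivedCategory.homologyFunctor C 0).map gM ≫ η.hom.app D) = 0 := by
    rw [Category.assoc, ← Functor.map_comp_assoc, hfg, Functor.map_zero, zero_comp, comp_zero]
  have hS_SE : (ShortComplex.mk (η.inv.app T.X₂ ≫ (DerivedCategory.homologyFunctor C 0).map fM)
      ((DerivedCategory.homologyFunctor C 0).map gM ≫ η.hom.app D) hzS).ShortExact := by
    refine ShortComplex.shortExact_of_iso
      (S₁ := ShortComplex.mk ((DerivedCategory.homologyFunctor C 0).map fM)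
        ((DerivedCategory.homologyFunctor C 0).map gM) hzS0)
      (ShortComplex.isoMk (η.app T.X₂) (Iso.refl _) (η.app D) ?_ ?_) hS0
    · simp
    · simp
  have hS_mem : (ShortComplex.mk (η.inv.app T.X₂ ≫ (DerivedCategory.homologyFunctor C 0).map fM)
      ((DerivedCategory.homologyFunctor C 0).map gM ≫ η.hom.app D) hzS) ∈ ℰ.ses :=
    hadapted _ hS_SE hD hE
  -- Step 4: the homology of the triangle morphism provides a ladder to `(u, v)`
  have hnat : ∀ {A B : C} (φ : A ⟶ B), (DerivedCategory.homologyFunctor C 0).map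
      ((DerivedCategory.singleFunctor C 0).map φ) ≫ η.hom.app B = η.hom.app A ≫ φ := by
    intro A B φ
    simpa using η.hom.naturality φ
  have hsq' : (η.inv.app T.X₂ ≫ (DerivedCategory.homologyFunctor C 0).map fM) ≫
      ((DerivedCategory.homologyFunctor C 0).map bmap ≫ η.hom.app W) =
      T.g ≫ (ShortComplex.mk u v w).f :=
    calc (η.inv.app T.X₂ ≫ (DerivedCategory.homologyFunctor C 0).map fM) ≫
        ((DerivedCategory.homologyFunctor C 0).map bmap ≫ η.hom.app W)
        = η.inv.app T.X₂ ≫ (DerivedCategory.homologyFunctor C 0).map (fM ≫ bmap) ≫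
            η.hom.app W := by
          rw [Functor.map_comp]
          simp only [Category.assoc]
      _ = η.inv.app T.X₂ ≫ (DerivedCategory.homologyFunctor C 0).map
            ((DerivedCategory.singleFunctor C 0).map (T.g ≫ u)) ≫ η.hom.app W := by
          rw [hb₁']
      _ = η.inv.app T.X₂ ≫ η.hom.app T.X₂ ≫ (T.g ≫ u) := by rw [hnat (T.g ≫ u)]
      _ = T.g ≫ u := by simp
  have htv' : ((DerivedCategory.homologyFunctor C 0).map bmap ≫ η.hom.app W) ≫
      (ShortComplex.mk u v w).g =
      ((DerivedCategory.homologyFunctor C 0).map gM ≫ η.hom.app D) ≫ (Iso.refl D).hom :=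
    calc ((DerivedCategory.homologyFunctor C 0).map bmap ≫ η.hom.app W) ≫ v
        = (DerivedCategory.homologyFunctor C 0).map bmap ≫ (η.hom.app W ≫ v) := by
          rw [Category.assoc]
      _ = (DerivedCategory.homologyFunctor C 0).map bmap ≫
            ((DerivedCategory.homologyFunctor C 0).map
              ((DerivedCategory.singleFunctor C 0).map v) ≫ η.hom.app D) := by
          rw [← hnat v]
      _ = ((DerivedCategory.homologyFunctor C 0).map bmap ≫
            (DerivedCategory.homologyFunctor C 0).map
              ((DerivedCategory.singleFunctor C 0).map v)) ≫ η.hom.app D := by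
          rw [Category.assoc]
      _ = ((DerivedCategory.homologyFunctor C 0).map gM ≫ η.hom.app D) ≫ (Iso.refl D).hom := by
          rw [← Functor.map_comp, hb₂']
          simp
  exact mem_of_ladder ℰ hS_SE hse hS_mem T.g
    ((DerivedCategory.homologyFunctor C 0).map bmap ≫ η.hom.app W) (Iso.refl D) hsq' htv'
end

section
/- In an exact category (𝒜,ℰ), the 3×3 lemma holds: given a commutative 3×3 diagram with all three columns ℰ-exact and two of the three rows ℰ-exact (including the middle one), the remaining row is ℰ-exact. -/
open CategoryTheory Limits

universe v u

variable {C : Type u} [Category.{v} C] [Abelian C]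

namespace ExactStructure

open ZeroObject

variable (ℰ : ExactStructure C)

lemma isAdmMono_of_isIso {X Y : C} (e : X ⟶ Y) [IsIso e] : IsAdmMono ℰ.ses e := by
  refine ⟨0, 0, comp_zero, ℰ.split_mem _ ⟨⟨inv e, 0, IsIso.hom_inv_id e,
    (Limits.isZero_zero C).eq_of_src _ _, by simp⟩⟩⟩

lemma isAdmEpi_of_isIso {X Y : C} (e : X ⟶ Y) [IsIso e] : IsAdmEpi ℰ.ses e := by
  refine ⟨0, 0, zero_comp, ℰ.split_mem _ ⟨⟨0, inv e,
    (Limits.isZero_zero C).eq_of_src _ _, IsIso.inv_hom_id e, by simp⟩⟩⟩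

lemma mem_of_admMono {X Y Z : C} {f : X ⟶ Y} {g : Y ⟶ Z} (w : f ≫ g = 0)
    (hf : IsAdmMono ℰ.ses f) (hse : (ShortComplex.mk f g w).ShortExact) :
    ShortComplex.mk f g w ∈ ℰ.ses := by
  obtain ⟨Z', g', w', hmem⟩ := hf
  have h1 := ℰ.shortExact _ hmem
  haveI : Epi g' := h1.epi_g
  haveI : Epi g := hse.epi_g
  haveI : Mono f := h1.mono_f
  have hc1 : IsColimit (CokernelCofork.ofπ g' w') := h1.exact.gIsCokernel
  have hc2 : IsColimit (CokernelCofork.ofπ g w) := hse.exact.gIsCokernel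
  have he3 : g' ≫ (IsColimit.coconePointUniqueUpToIso hc1 hc2).hom = g := by
    simpa using IsColimit.comp_coconePointUniqueUpToIso_hom hc1 hc2 WalkingParallelPair.one
  exact ℰ.iso_mem (ShortComplex.mk f g' w') _
    (ShortComplex.isoMk (Iso.refl _) (Iso.refl _) (IsColimit.coconePointUniqueUpToIso hc1 hc2)
      (by simp) (by simp [he3])) hmem

lemma mem_of_admEpi {X Y Z : C} {f : X ⟶ Y} {g : Y ⟶ Z} (w : f ≫ g = 0)
    (hg : IsAdmEpi ℰ.ses g) (hse : (ShortComplex.mk f g w).ShortExact) :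
    ShortComplex.mk f g w ∈ ℰ.ses := by
  obtain ⟨X', f', w', hmem⟩ := hg
  have h1 := ℰ.shortExact _ hmem
  haveI : Mono f' := h1.mono_f
  haveI : Mono f := hse.mono_f
  haveI : Epi g := hse.epi_g
  have hc1 : IsLimit (KernelFork.ofι f' w') := h1.exact.fIsKernel
  have hc2 : IsLimit (KernelFork.ofι f w) := hse.exact.fIsKernel
  have he1 : (IsLimit.conePointUniqueUpToIso hc1 hc2).hom ≫ f = f' := by
    simpa using IsLimit.conePointUniqueUpToIso_hom_comp hc1 hc2 WalkingParallelPair.zero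
  exact ℰ.iso_mem (ShortComplex.mk f' g w') _
    (ShortComplex.isoMk (IsLimit.conePointUniqueUpToIso hc1 hc2) (Iso.refl _) (Iso.refl _)
      (by simp [he1]) (by simp)) hmem


lemma isAdmMono_of_comp {X Y Z : C} (f : X ⟶ Y) (j : Y ⟶ Z)
    (h : IsAdmMono ℰ.ses (f ≫ j)) : IsAdmMono ℰ.ses f := by
  obtain ⟨Q, c, wc, hmem⟩ := h
  have hse := ℰ.shortExact _ hmem
  haveI : Mono (f ≫ j) := hse.mono_f
  haveI : Epi c := hse.epi_g
  haveI hmf : Mono f := mono_of_mono f j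
  have wjc : f ≫ j ≫ c = 0 := by rw [← Category.assoc]; exact wc
  set q : Y ⟶ cokernel f := cokernel.π f with hqdef
  set jbar : cokernel f ⟶ Q := cokernel.desc f (j ≫ c) wjc with hjbar
  have hcomm : j ≫ c = q ≫ jbar := by rw [hjbar, hqdef, cokernel.π_desc]
  have hexq : (ShortComplex.mk f q (cokernel.condition f)).Exact :=
    ShortComplex.exact_of_g_is_cokernel _ (cokernelIsCokernel f)
  set lift : Y ⟶ pullback c jbar := pullback.lift j q hcomm with hliftdef
  have hl1 : lift ≫ pullback.fst c jbar = j := pullback.lift_fst _ _ _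
  have hl2 : lift ≫ pullback.snd c jbar = q := pullback.lift_snd _ _ _
  haveI hmono : Mono lift := by
    rw [Preadditive.mono_iff_cancel_zero]
    intro T t ht
    have h1 : t ≫ q = 0 := by rw [← hl2, ← Category.assoc, ht, zero_comp]
    obtain ⟨T', π, hπ, x, hx⟩ := hexq.exact_up_to_refinements t h1
    have hx' : π ≫ t = x ≫ f := hx
    haveI := hπ
    have htj : t ≫ j = 0 := by rw [← hl1, ← Category.assoc, ht, zero_comp]
    have h2 : x ≫ f ≫ j = 0 := by
      rw [← Category.assoc, ← hx', Category.assoc, htj, comp_zero]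
    have hx0 : x = 0 := zero_of_comp_mono (f ≫ j) h2
    have hπt : π ≫ t = 0 := by rw [hx', hx0, zero_comp]
    rw [← cancel_epi π, comp_zero]
    exact hπt
  haveI hepi : Epi lift := by
    rw [epi_iff_surjective_up_to_refinements]
    intro T y
    obtain ⟨T1, π1, hπ1, b, hb⟩ :=
      surjective_up_to_refinements_of_epi q (y ≫ pullback.snd c jbar)
    have hb' : π1 ≫ y ≫ pullback.snd c jbar = b ≫ q := hb
    have hkey : (π1 ≫ y ≫ pullback.fst c jbar - b ≫ j) ≫ c = 0 := by
      rw [Preadditive.sub_comp, Category.assoc, Category.assoc, Category.assoc,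
        pullback.condition, hcomm, ← Category.assoc b, ← hb']
      simp
    obtain ⟨T2, π2, hπ2, a, ha⟩ := hse.exact.exact_up_to_refinements _ hkey
    have ha' : π2 ≫ (π1 ≫ y ≫ pullback.fst c jbar - b ≫ j) = a ≫ (f ≫ j) := ha
    have hfq : f ≫ q = 0 := cokernel.condition f
    refine ⟨T2, π2 ≫ π1, epi_comp _ _, π2 ≫ b + a ≫ f, ?_⟩
    apply pullback.hom_ext
    · simp only [Category.assoc, Preadditive.add_comp, hl1]
      rw [← ha']
      simp only [Preadditive.comp_sub]
      abel
    · simp only [Category.assoc, Preadditive.add_comp, hl2]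
      rw [show π1 ≫ y ≫ pullback.snd c jbar = b ≫ q from hb', hfq]
      simp
  haveI : IsIso lift := isIso_of_mono_of_epi lift
  have hqadm : IsAdmEpi ℰ.ses q := by
    rw [← hl2]
    exact ℰ.admEpi_comp (ℰ.isAdmEpi_of_isIso lift)
      (ℰ.admEpi_pullback c jbar ⟨_, f ≫ j, wc, hmem⟩)
  have hmemq : ShortComplex.mk f q (cokernel.condition f) ∈ ℰ.ses :=
    ℰ.mem_of_admEpi _ hqadm ⟨hexq⟩
  exact ⟨_, q, cokernel.condition f, hmemq⟩


lemma isAdmEpi_of_comp {X Y Z : C} (f : X ⟶ Y) (g : Y ⟶ Z)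
    (h : IsAdmEpi ℰ.ses (f ≫ g)) : IsAdmEpi ℰ.ses g := by
  obtain ⟨K, k, wk, hmem⟩ := h
  have hse := ℰ.shortExact _ hmem
  haveI : Mono k := hse.mono_f
  haveI : Epi (f ≫ g) := hse.epi_g
  haveI heg : Epi g := epi_of_epi f g
  set m : kernel g ⟶ Y := kernel.ι g with hmdef
  have wkf : (k ≫ f) ≫ g = 0 := by rw [Category.assoc]; exact wk
  set fbar : K ⟶ kernel g := kernel.lift g (k ≫ f) wkf with hfbar
  have hcomm : k ≫ f = fbar ≫ m := (kernel.lift_ι g (k ≫ f) wkf).symm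
  have hmg : m ≫ g = 0 := kernel.condition g
  have hexm : (ShortComplex.mk m g hmg).Exact :=
    ShortComplex.exact_of_f_is_kernel _ (kernelIsKernel g)
  set desc : pushout k fbar ⟶ Y := pushout.desc f m hcomm with hdesc
  have hd1 : pushout.inl k fbar ≫ desc = f := pushout.inl_desc _ _ _
  have hd2 : pushout.inr k fbar ≫ desc = m := pushout.inr_desc _ _ _
  set π : (X ⊞ kernel g : C) ⟶ pushout k fbar :=
    biprod.desc (pushout.inl k fbar) (pushout.inr k fbar) with hπdef
  have hπ0 : biprod.lift k (-fbar) ≫ π = 0 := by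
    rw [hπdef, biprod.lift_desc, Preadditive.neg_comp, pushout.condition]
    simp
  haveI hπepi : Epi π := by
    constructor
    intro W w₁ w₂ hw
    apply pushout.hom_ext
    · have h2 := biprod.inl ≫= hw
      simpa [hπdef] using h2
    · have h2 := biprod.inr ≫= hw
      simpa [hπdef] using h2
  have hcolim : IsColimit (CokernelCofork.ofπ π hπ0) :=
    CokernelCofork.IsColimit.ofπ _ _
      (fun {W} t ht => pushout.desc (biprod.inl ≫ t) (biprod.inr ≫ t) (by
        rw [biprod.lift_eq] at ht
        simp only [Preadditive.add_comp, Preadditive.neg_comp, Category.assoc] at ht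
        rw [add_neg_eq_zero] at ht
        exact ht))
      (fun {W} t ht => by
        apply biprod.hom_ext'
        · simp [hπdef]
          exact pushout.inl_desc _ _ _
        · simp [hπdef]
          exact pushout.inr_desc _ _ _)
      (fun {W} t ht s hs => by
        apply pushout.hom_ext
        · have h2 := biprod.inl ≫= hs
          simp only [hπdef, biprod.inl_desc_assoc] at h2
          rw [pushout.inl_desc]
          exact h2
        · have h2 := biprod.inr ≫= hs
          simp only [hπdef, biprod.inr_desc_assoc] at h2
          rw [pushout.inr_desc]
          exact h2)
  haveI hmono : Mono desc := by
    rw [Preadditive.mono_iff_cancel_zero]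
    intro T t ht
    obtain ⟨T1, π1, hπ1, s, hs⟩ := surjective_up_to_refinements_of_epi π t
    haveI := hπ1
    have hsd : (s ≫ π) ≫ desc = 0 := by rw [← hs, Category.assoc, ht, comp_zero]
    have hπd : π ≫ desc = biprod.desc f m := by
      apply biprod.hom_ext' <;> simp [hπdef, hd1, hd2]
    have hsd2 : s ≫ biprod.desc f m = 0 := by rw [← hπd, ← Category.assoc]; exact hsd
    have hdec : s ≫ biprod.fst ≫ f + s ≫ biprod.snd ≫ m = 0 := by
      rw [biprod.desc_eq] at hsd2
      simpa [Preadditive.comp_add, Category.assoc] using hsd2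
    have h1 : (s ≫ biprod.fst) ≫ f ≫ g = 0 := by
      have h2 := congrArg (fun z => z ≫ g) hdec
      simp only [Preadditive.add_comp, Category.assoc, zero_comp, hmg, comp_zero,
        add_zero] at h2
      simpa using h2
    obtain ⟨T2, π2, hπ2, yk, hyk⟩ := hse.exact.exact_up_to_refinements (s ≫ biprod.fst) h1
    haveI := hπ2
    have hyk' : π2 ≫ s ≫ biprod.fst = yk ≫ k := hyk
    have e2 : s ≫ biprod.snd ≫ m = -(s ≫ biprod.fst ≫ f) := by
      rw [eq_neg_iff_add_eq_zero, add_comm]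
      exact hdec
    have hyk2 := hyk' =≫ f
    simp only [Category.assoc] at hyk2
    have h3 : π2 ≫ s = yk ≫ biprod.lift k (-fbar) := by
      apply biprod.hom_ext
      · simpa using hyk'
      · simp only [Category.assoc, biprod.lift_snd, Preadditive.comp_neg]
        rw [← cancel_mono m]
        simp only [Category.assoc, Preadditive.neg_comp]
        rw [← hcomm, e2, Preadditive.comp_neg, hyk2]
    have h4 : (π2 ≫ π1) ≫ t = 0 := by
      rw [Category.assoc, hs, ← Category.assoc, h3, Category.assoc, hπ0, comp_zero]
    haveI : Epi (π2 ≫ π1) := epi_comp _ _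
    rw [← cancel_epi (π2 ≫ π1), comp_zero]
    exact h4
  haveI hepi : Epi desc := by
    rw [epi_iff_surjective_up_to_refinements]
    intro T y
    obtain ⟨T1, π1, hπ1, a, ha⟩ := surjective_up_to_refinements_of_epi (f ≫ g) (y ≫ g)
    have hker : (π1 ≫ y - a ≫ f) ≫ g = 0 := by
      simp only [Preadditive.sub_comp, Category.assoc]
      rw [ha]
      simp
    refine ⟨T1, π1, hπ1,
      a ≫ pushout.inl k fbar + kernel.lift g (π1 ≫ y - a ≫ f) hker ≫ pushout.inr k fbar, ?_⟩
    rw [Preadditive.add_comp, Category.assoc, Category.assoc, hd1, hd2, hmdef, kernel.lift_ι]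
    abel
  haveI : IsIso desc := isIso_of_mono_of_epi desc
  have hkadm : IsAdmMono ℰ.ses k := ⟨_, f ≫ g, wk, hmem⟩
  have hmadm : IsAdmMono ℰ.ses m := by
    rw [← hd2]
    exact ℰ.admMono_comp (ℰ.admMono_pushout k fbar hkadm) (ℰ.isAdmMono_of_isIso desc)
  have hmemm : ShortComplex.mk m g hmg ∈ ℰ.ses := ℰ.mem_of_admMono _ hmadm ⟨hexm⟩
  exact ⟨_, m, hmg, hmemm⟩

end ExactStructure

/-- 3×3 lemma: in an exact category `(𝒜, ℰ)`, given a commutative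
3×3 diagram whose three columns are `ℰ`-exact and in which two of the three rows,
including the middle one, are `ℰ`-exact, the remaining row is `ℰ`-exact. -/
theorem three_by_three_lemma (ℰ : ExactStructure C)
    {A B Cc A' B' C' A'' B'' C'' : C}
    -- rows
    (f₁ : A ⟶ B) (g₁ : B ⟶ Cc) (f₂ : A' ⟶ B') (g₂ : B' ⟶ C')
    (f₃ : A'' ⟶ B'') (g₃ : B'' ⟶ C'')
    -- columns
    (p₁ : A ⟶ A') (p₂ : A' ⟶ A'') (q₁ : B ⟶ B') (q₂ : B' ⟶ B'')
    (r₁ : Cc ⟶ C') (r₂ : C' ⟶ C'')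
    -- commutativity of the four squares
    (sq₁ : f₁ ≫ q₁ = p₁ ≫ f₂) (sq₂ : g₁ ≫ r₁ = q₁ ≫ g₂)
    (sq₃ : f₂ ≫ q₂ = p₂ ≫ f₃) (sq₄ : g₂ ≫ r₂ = q₂ ≫ g₃)
    -- the rows and columns are complexes
    (w₁ : f₁ ≫ g₁ = 0) (w₂ : f₂ ≫ g₂ = 0) (w₃ : f₃ ≫ g₃ = 0)
    (wA : p₁ ≫ p₂ = 0) (wB : q₁ ≫ q₂ = 0) (wC : r₁ ≫ r₂ = 0)
    -- the three columns are ℰ-exact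
    (hA : ShortComplex.mk p₁ p₂ wA ∈ ℰ.ses)
    (hB : ShortComplex.mk q₁ q₂ wB ∈ ℰ.ses)
    (hC : ShortComplex.mk r₁ r₂ wC ∈ ℰ.ses)
    -- the middle row is ℰ-exact
    (hmid : ShortComplex.mk f₂ g₂ w₂ ∈ ℰ.ses) :
    (ShortComplex.mk f₁ g₁ w₁ ∈ ℰ.ses → ShortComplex.mk f₃ g₃ w₃ ∈ ℰ.ses) ∧
    (ShortComplex.mk f₃ g₃ w₃ ∈ ℰ.ses → ShortComplex.mk f₁ g₁ w₁ ∈ ℰ.ses) := by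
  
  have sA := ℰ.shortExact _ hA
  have sB := ℰ.shortExact _ hB
  have sC := ℰ.shortExact _ hC
  have sM := ℰ.shortExact _ hmid
  haveI : Mono p₁ := sA.mono_f
  haveI : Epi p₂ := sA.epi_g
  haveI : Mono q₁ := sB.mono_f
  haveI : Epi q₂ := sB.epi_g
  haveI : Mono r₁ := sC.mono_f
  haveI : Epi r₂ := sC.epi_g
  haveI : Mono f₂ := sM.mono_f
  haveI : Epi g₂ := sM.epi_g
  constructor
  · -- top row exact implies bottom row exact
    intro h1
    have s1 := ℰ.shortExact _ h1
    haveI hmf1 : Mono f₁ := s1.mono_f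
    haveI heg1 : Epi g₁ := s1.epi_g
    have hg3 : IsAdmEpi ℰ.ses g₃ := by
      refine ℰ.isAdmEpi_of_comp q₂ g₃ ?_
      rw [← sq₄]
      exact ℰ.admEpi_comp ⟨_, _, _, hmid⟩ ⟨_, _, _, hC⟩
    haveI heg3 : Epi g₃ := by
      have h2 : Epi (q₂ ≫ g₃) := by rw [← sq₄]; exact epi_comp _ _
      exact epi_of_epi q₂ g₃
    haveI hmono3 : Mono f₃ := by
      rw [Preadditive.mono_iff_cancel_zero]
      intro T t ht
      obtain ⟨T1, ρ1, hρ1, a', ha'⟩ := surjective_up_to_refinements_of_epi p₂ t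
      haveI := hρ1
      have h1' : (a' ≫ f₂) ≫ q₂ = 0 := by
        rw [Category.assoc, sq₃, ← Category.assoc, ← ha', Category.assoc, ht, comp_zero]
      obtain ⟨T2, ρ2, hρ2, b, hb⟩ := sB.exact.exact_up_to_refinements (a' ≫ f₂) h1'
      haveI := hρ2
      have h2' : b ≫ g₁ = 0 := by
        apply zero_of_comp_mono r₁
        rw [Category.assoc, sq₂, ← Category.assoc, ← hb]
        simp only [Category.assoc]
        rw [w₂, comp_zero, comp_zero]
      obtain ⟨T3, ρ3, hρ3, a, haa⟩ := s1.exact.exact_up_to_refinements b h2'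
      haveI := hρ3
      have h4 : (ρ3 ≫ ρ2 ≫ a') ≫ f₂ = (a ≫ p₁) ≫ f₂ := by
        simp only [Category.assoc]
        rw [hb, ← Category.assoc, haa, Category.assoc, sq₁]
      have h5 : ρ3 ≫ ρ2 ≫ a' = a ≫ p₁ := (cancel_mono f₂).1 h4
      have h6 := h5 =≫ p₂
      simp only [Category.assoc] at h6
      rw [wA, comp_zero] at h6
      haveI : Epi (ρ3 ≫ ρ2 ≫ ρ1) := epi_comp _ _
      rw [← cancel_epi (ρ3 ≫ ρ2 ≫ ρ1), comp_zero]
      simp only [Category.assoc]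
      rw [ha']
      exact h6
    have hex3 : (ShortComplex.mk f₃ g₃ w₃).Exact := by
      rw [ShortComplex.exact_iff_exact_up_to_refinements]
      intro T x hx
      have hx' : x ≫ g₃ = 0 := hx
      obtain ⟨T1, ρ1, hρ1, b', hb'⟩ := surjective_up_to_refinements_of_epi q₂ x
      haveI := hρ1
      have h1' : (b' ≫ g₂) ≫ r₂ = 0 := by
        rw [Category.assoc, sq₄, ← Category.assoc, ← hb', Category.assoc, hx', comp_zero]
      obtain ⟨T2, ρ2, hρ2, cc, hcc⟩ := sC.exact.exact_up_to_refinements (b' ≫ g₂) h1'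
      haveI := hρ2
      obtain ⟨T3, ρ3, hρ3, b, hbb⟩ := surjective_up_to_refinements_of_epi g₁ cc
      haveI := hρ3
      have h2' : (ρ3 ≫ ρ2 ≫ b' - b ≫ q₁) ≫ g₂ = 0 := by
        simp only [Preadditive.sub_comp, Category.assoc]
        rw [hcc, ← sq₂, ← Category.assoc, hbb, Category.assoc, sub_self]
      obtain ⟨T4, ρ4, hρ4, a', ha'⟩ := sM.exact.exact_up_to_refinements _ h2'
      haveI := hρ4
      refine ⟨T4, ρ4 ≫ ρ3 ≫ ρ2 ≫ ρ1, epi_comp _ _, a' ≫ p₂, ?_⟩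
      simp only [Category.assoc]
      rw [hb', ← sq₃, ← Category.assoc a' f₂ q₂, ← ha']
      simp only [Preadditive.sub_comp, Preadditive.comp_sub, Category.assoc, wB,
        comp_zero, sub_zero]
    exact ℰ.mem_of_admEpi w₃ hg3 { exact := hex3, mono_f := hmono3, epi_g := heg3 }
  · -- bottom row exact implies top row exact
    intro h3
    have s3 := ℰ.shortExact _ h3
    haveI : Mono f₃ := s3.mono_f
    haveI : Epi g₃ := s3.epi_g
    have hf1 : IsAdmMono ℰ.ses f₁ := by
      refine ℰ.isAdmMono_of_comp f₁ q₁ ?_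
      rw [sq₁]
      exact ℰ.admMono_comp ⟨_, _, _, hA⟩ ⟨_, _, _, hmid⟩
    haveI hm1 : Mono f₁ := by
      have h2 : Mono (f₁ ≫ q₁) := by rw [sq₁]; exact mono_comp _ _
      exact mono_of_mono f₁ q₁
    haveI hepi1 : Epi g₁ := by
      rw [epi_iff_surjective_up_to_refinements]
      intro T y
      obtain ⟨T1, ρ1, hρ1, b', hb'⟩ := surjective_up_to_refinements_of_epi g₂ (y ≫ r₁)
      haveI := hρ1
      have h1' : (b' ≫ q₂) ≫ g₃ = 0 := by
        rw [Category.assoc, ← sq₄, ← Category.assoc, ← hb']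
        simp only [Category.assoc]
        rw [wC, comp_zero, comp_zero]
      obtain ⟨T2, ρ2, hρ2, a'', ha''⟩ := s3.exact.exact_up_to_refinements (b' ≫ q₂) h1'
      haveI := hρ2
      obtain ⟨T3, ρ3, hρ3, a', ha'⟩ := surjective_up_to_refinements_of_epi p₂ a''
      haveI := hρ3
      have h2' : (ρ3 ≫ ρ2 ≫ b' - a' ≫ f₂) ≫ q₂ = 0 := by
        simp only [Preadditive.sub_comp, Category.assoc]
        rw [ha'', sq₃, ← Category.assoc, ha', Category.assoc, sub_self]
      obtain ⟨T4, ρ4, hρ4, b, hbq⟩ := sB.exact.exact_up_to_refinements _ h2'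
      haveI := hρ4
      refine ⟨T4, ρ4 ≫ ρ3 ≫ ρ2 ≫ ρ1, epi_comp _ _, b, ?_⟩
      rw [← cancel_mono r₁]
      simp only [Category.assoc]
      rw [hb', sq₂, ← Category.assoc b q₁ g₂, ← hbq]
      simp only [Preadditive.sub_comp, Preadditive.comp_sub, Category.assoc, w₂,
        comp_zero, sub_zero]
    have hex1 : (ShortComplex.mk f₁ g₁ w₁).Exact := by
      rw [ShortComplex.exact_iff_exact_up_to_refinements]
      intro T x hx
      have hx' : x ≫ g₁ = 0 := hx
      have h1' : (x ≫ q₁) ≫ g₂ = 0 := by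
        rw [Category.assoc, ← sq₂, ← Category.assoc, hx', zero_comp]
      obtain ⟨T1, ρ1, hρ1, a', ha'⟩ := sM.exact.exact_up_to_refinements (x ≫ q₁) h1'
      haveI := hρ1
      have h2' : a' ≫ p₂ = 0 := by
        apply zero_of_comp_mono f₃
        rw [Category.assoc, ← sq₃, ← Category.assoc, ← ha']
        simp only [Category.assoc]
        rw [wB, comp_zero, comp_zero]
      obtain ⟨T2, ρ2, hρ2, a, haa⟩ := sA.exact.exact_up_to_refinements a' h2'
      haveI := hρ2
      refine ⟨T2, ρ2 ≫ ρ1, epi_comp _ _, a, ?_⟩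
      rw [← cancel_mono q₁]
      simp only [Category.assoc]
      rw [ha', sq₁, ← Category.assoc, haa, Category.assoc]
    exact ℰ.mem_of_admMono w₁ hf1 { exact := hex1, mono_f := hm1, epi_g := hepi1 }
end
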